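/- arXiv:1909.09856 — 5 statements merged into one kernel-verified Lean document; each statement's English description precedes it below -/
import Mathlib

section
/- Let X be a finite set, 𝔽 a field, A ⊆ X, and c : A → 𝔽 with c(a) ≠ 0 for all a ∈ A. Define F : X × X × X → 𝔽 by F(x₁,x₂,x₃) = Σ_{a∈A} c(a)·δ_a(x₁)·δ_a(x₂)·δ_a(x₃), where δ_a(x) = 1 if x = a and 0 otherwise. If F admits a slice decomposition of size m, then m ≥ |A|. In particular the slice rank of F equals |A|. -/
open Module

set_option synthInstance.maxHeartbeats 1000000
set_option maxHeartbeats 1000000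

lemma exists_high_weight {ι 𝔽 : Type*} [Fintype ι] [DecidableEq ι] [Field 𝔽] [DecidableEq 𝔽]
    (W : Submodule 𝔽 (ι → 𝔽)) :
    ∃ v ∈ W, Module.finrank 𝔽 W ≤ (Finset.univ.filter (fun i => v i ≠ 0)).card := by
  haveI : FiniteDimensional 𝔽 W := inferInstance
  set ε : ι → Module.Dual 𝔽 W := fun i => (LinearMap.proj i).comp W.subtype with hε
  set S : Submodule 𝔽 (Module.Dual 𝔽 W) := Submodule.span 𝔽 (Set.range ε) with hS
  haveI : FiniteDimensional 𝔽 S := inferInstance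
  -- extract independent spanning subset of range ε
  obtain ⟨t, hts, htspan, htind⟩ := exists_linearIndependent 𝔽 (Set.range ε)
  have htfin : t.Finite := htind.setFinite
  haveI := htfin.fintype
  have hcard : finrank 𝔽 S = t.toFinset.card := by
    rw [hS, ← htspan]
    exact (finrank_span_set_eq_card htind)
  -- the evaluation map into t → 𝔽
  set L : W →ₗ[𝔽] (t → 𝔽) := LinearMap.pi (fun φ : t => (φ : Module.Dual 𝔽 W)) with hL
  have hLinj : Function.Injective L := by
    rw [← LinearMap.ker_eq_bot, LinearMap.ker_eq_bot']
    intro w hw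
    have hvanish : ∀ ψ ∈ S, ψ w = 0 := by
      intro ψ hψ
      have : Submodule.span 𝔽 t ≤ LinearMap.ker (Module.Dual.eval 𝔽 W w) := by
        rw [Submodule.span_le]
        intro φ hφ
        have := congrFun hw ⟨φ, hφ⟩
        simpa [L] using this
      rw [hS, ← htspan] at hψ
      simpa using this hψ
    have hall : ∀ i, (w : ι → 𝔽) i = 0 := fun i =>
      hvanish (ε i) (Submodule.subset_span ⟨i, rfl⟩)
    ext i; exact hall i
  have h2 : finrank 𝔽 (t → 𝔽) = t.toFinset.card := by
    rw [Module.finrank_fintype_fun_eq_card]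
    simp [Set.toFinset_card, Fintype.card_coe]
  have hfr : finrank 𝔽 W = finrank 𝔽 (t → 𝔽) := by
    have h1 : finrank 𝔽 S ≤ finrank 𝔽 (Module.Dual 𝔽 W) := Submodule.finrank_le _
    rw [Subspace.dual_finrank_eq] at h1
    have h3 : finrank 𝔽 W ≤ finrank 𝔽 (t → 𝔽) :=
      LinearMap.finrank_le_finrank_of_injective hLinj
    omega
  have hLsurj : Function.Surjective L :=
    (LinearMap.injective_iff_surjective_of_finrank_eq_finrank hfr).mp hLinj
  obtain ⟨w, hw⟩ := hLsurj (fun _ => 1)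
  refine ⟨(w : ι → 𝔽), w.2, ?_⟩
  -- choose representatives
  have hrep : ∀ φ : t, ∃ i : ι, ε i = (φ : Module.Dual 𝔽 W) := fun φ => hts φ.2
  choose rep hrep using hrep
  have hw1 : ∀ φ : t, (w : ι → 𝔽) (rep φ) = 1 := by
    intro φ
    have := congrFun hw φ
    simp only [L, LinearMap.pi_apply] at this
    rw [← hrep φ] at this
    simpa [ε] using this
  have hrepinj : Function.Injective rep := by
    intro φ ψ h
    have : (φ : Module.Dual 𝔽 W) = ψ := by rw [← hrep φ, ← hrep ψ, h]
    exact Subtype.ext this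
  have hinj2 : Function.Injective (fun φ : t =>
      (⟨rep φ, by simp [hw1 φ]⟩ : {i : ι // (w : ι → 𝔽) i ≠ 0})) := by
    intro φ ψ h
    exact hrepinj (congrArg Subtype.val h)
  have := Fintype.card_le_of_injective _ hinj2
  have hcard2 : Fintype.card {i : ι // (w : ι → 𝔽) i ≠ 0} =
      (Finset.univ.filter (fun i => (w : ι → 𝔽) i ≠ 0)).card := Fintype.card_subtype _
  have hct : Fintype.card t = t.toFinset.card := by simp [Set.toFinset_card, Fintype.card_coe]
  omega



/-- `T : X → Y → Z → 𝔽` admits a slice decomposition of size `m`: there are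
`a ≤ b ≤ m` and functions `fᵢ, gᵢ` with
`T x y z = ∑_{i<a} f¹ᵢ(x,y) g¹ᵢ(z) + ∑_{a≤i<b} f²ᵢ(x,z) g²ᵢ(y) + ∑_{b≤i<m} f³ᵢ(y,z) g³ᵢ(x)`. -/
def HasSliceDecomp {X Y Z 𝔽 : Type*} [Field 𝔽] (T : X → Y → Z → 𝔽) (m : ℕ) : Prop :=
  ∃ a b : ℕ, a ≤ b ∧ b ≤ m ∧
    ∃ (f₁ : ℕ → X → Y → 𝔽) (g₁ : ℕ → Z → 𝔽)
      (f₂ : ℕ → X → Z → 𝔽) (g₂ : ℕ → Y → 𝔽)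
      (f₃ : ℕ → Y → Z → 𝔽) (g₃ : ℕ → X → 𝔽),
      ∀ x y z, T x y z =
        (∑ i ∈ Finset.range a, f₁ i x y * g₁ i z) +
        (∑ i ∈ Finset.Ico a b, f₂ i x z * g₂ i y) +
        (∑ i ∈ Finset.Ico b m, f₃ i y z * g₃ i x)

theorem slice_rank_lower {X 𝔽 : Type*} [Fintype X] [DecidableEq X] [Field 𝔽]
    (A : Finset X) (c : X → 𝔽) (hc : ∀ a ∈ A, c a ≠ 0) (m : ℕ)
    (hm : HasSliceDecomp
          (fun x₁ x₂ x₃ => ∑ a ∈ A, c a * (if x₁ = a then (1 : 𝔽) else 0) *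
            (if x₂ = a then (1 : 𝔽) else 0) * (if x₃ = a then (1 : 𝔽) else 0)) m) :
    A.card ≤ m := by
  classical
  by_contra hlt
  push_neg at hlt
  obtain ⟨a, b, hab, hbm, f₁, g₁, f₂, g₂, f₃, g₃, hT⟩ := hm
  -- the linear map of constraints
  let Φ : (↥A → 𝔽) →ₗ[𝔽] (Fin (m - b) → 𝔽) :=
    { toFun := fun h i => ∑ x : ↥A, h x * g₃ (b + i.1) x.1
      map_add' := by
        intro u v; funext i
        simp [add_mul, Finset.sum_add_distrib]
      map_smul' := by
        intro r v; funext i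
        simp [Finset.mul_sum, mul_assoc] }
  have hrank : finrank 𝔽 (LinearMap.range Φ) + finrank 𝔽 (LinearMap.ker Φ) = A.card := by
    rw [LinearMap.finrank_range_add_finrank_ker]
    simp [Module.finrank_fintype_fun_eq_card]
  have hrle : finrank 𝔽 (LinearMap.range Φ) ≤ m - b := by
    have := Submodule.finrank_le (LinearMap.range Φ)
    simpa [Module.finrank_fintype_fun_eq_card] using this
  have hkerge : b + 1 ≤ finrank 𝔽 (LinearMap.ker Φ) := by omega
  obtain ⟨v, hv, hvcard⟩ := exists_high_weight (LinearMap.ker Φ)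
  -- extend v by zero
  let h' : X → 𝔽 := fun x => if hx : x ∈ A then v ⟨x, hx⟩ else 0
  have h'zero : ∀ x ∉ A, h' x = 0 := by intro x hx; simp [h', hx]
  have h'val : ∀ x : ↥A, h' x.1 = v x := by intro x; simp [h']
  -- the contracted matrix
  let M : Matrix X X 𝔽 := fun y z => ∑ x : X, h' x *
    (∑ p ∈ A, c p * (if x = p then (1 : 𝔽) else 0) *
      (if y = p then (1 : 𝔽) else 0) * (if z = p then (1 : 𝔽) else 0))
  -- M is diagonal
  have hMdiag : M = Matrix.diagonal (fun x => h' x * c x) := by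
    funext y z
    have : M y z = ∑ p ∈ A, h' p * (c p *
        (if y = p then (1 : 𝔽) else 0) * (if z = p then (1 : 𝔽) else 0)) := by
      show (∑ x : X, h' x * ∑ p ∈ A, _) = _
      simp_rw [Finset.mul_sum]
      rw [Finset.sum_comm]
      apply Finset.sum_congr rfl
      intro p hp
      rw [Finset.sum_eq_single p]
      · simp [mul_assoc]
      · intro x _ hx; simp [hx]
      · simp
    rw [this]
    by_cases hyz : y = z
    · subst hyz
      by_cases hy : y ∈ A
      · rw [Finset.sum_eq_single_of_mem y hy]
        · simp [Matrix.diagonal, mul_comm]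
        · intro p hp hne
          have : ¬ (y = p) := fun h => hne h.symm
          simp [this]
      · rw [Finset.sum_eq_zero, Matrix.diagonal_apply_eq, h'zero y hy, zero_mul]
        intro p hp
        have : ¬ (y = p) := fun h => hy (h ▸ hp)
        simp [this]
    · rw [Finset.sum_eq_zero, Matrix.diagonal_apply_ne _ hyz]
      intro p hp
      by_cases h : y = p
      · subst h
        have : ¬ (z = y) := fun h => hyz h.symm
        simp [this]
      · simp [h]
  -- rank of M is at least b+1
  have hranklow : b + 1 ≤ M.rank := by
    rw [hMdiag, Matrix.rank_diagonal]
    have hinj : Function.Injective (fun i : {i : ↥A // v i ≠ 0} =>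
        (⟨(i.1 : X), by
          exact mul_ne_zero (by rw [h'val]; exact i.2) (hc _ i.1.2)⟩ :
          {x : X // h' x * c x ≠ 0})) := by
      intro i j h
      exact Subtype.ext (Subtype.ext (by simpa using congrArg Subtype.val h))
    have hle := Fintype.card_le_of_injective _ hinj
    have h1 : Fintype.card {i : ↥A // v i ≠ 0} =
        (Finset.univ.filter (fun i => v i ≠ 0)).card := Fintype.card_subtype _
    omega
  -- the contraction kills the third group
  have hthird : ∀ i ∈ Finset.Ico b m, (∑ x : X, h' x * g₃ i x) = 0 := by
    intro i hi
    simp only [Finset.mem_Ico] at hi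
    have hsum : (∑ x : X, h' x * g₃ i x) = ∑ x : ↥A, v x * g₃ i x.1 := by
      have e1 : (∑ x : X, h' x * g₃ i x) = ∑ x ∈ A, h' x * g₃ i x :=
        (Finset.sum_subset A.subset_univ (fun x _ hx => by rw [h'zero x hx, zero_mul])).symm
      rw [e1, ← Finset.sum_coe_sort A (fun x => h' x * g₃ i x)]
      exact Finset.sum_congr rfl fun x _ => by rw [h'val]
    have hvk := hv
    rw [LinearMap.mem_ker] at hvk
    have := congrFun hvk ⟨i - b, by omega⟩
    simp only [Φ, LinearMap.coe_mk, AddHom.coe_mk, Pi.zero_apply] at this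
    rw [hsum]
    have hib : b + (i - b) = i := by omega
    rw [← hib]
    exact this
  -- M factors through b columns
  let P : Matrix X (Fin b) 𝔽 := fun y i =>
    if i.1 < a then ∑ x : X, h' x * f₁ i.1 x y else g₂ i.1 y
  let Q : Matrix (Fin b) X 𝔽 := fun i z =>
    if i.1 < a then g₁ i.1 z else ∑ x : X, h' x * f₂ i.1 x z
  have hMPQ : M = P * Q := by
    funext y z
    have hMyz : M y z = ∑ x : X, h' x *
        ((∑ i ∈ Finset.range a, f₁ i x y * g₁ i z) +
         (∑ i ∈ Finset.Ico a b, f₂ i x z * g₂ i y) +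
         (∑ i ∈ Finset.Ico b m, f₃ i y z * g₃ i x)) := by
      apply Finset.sum_congr rfl
      intro x _
      exact congrArg (h' x * ·) (hT x y z)
    have e1 : (∑ x : X, h' x * ∑ i ∈ Finset.range a, f₁ i x y * g₁ i z)
        = ∑ i ∈ Finset.range a, (∑ x : X, h' x * f₁ i x y) * g₁ i z := by
      simp_rw [Finset.mul_sum]
      rw [Finset.sum_comm]
      refine Finset.sum_congr rfl fun i _ => ?_
      rw [Finset.sum_mul]
      exact Finset.sum_congr rfl fun x _ => by ring
    have e2 : (∑ x : X, h' x * ∑ i ∈ Finset.Ico a b, f₂ i x z * g₂ i y)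
        = ∑ i ∈ Finset.Ico a b, g₂ i y * (∑ x : X, h' x * f₂ i x z) := by
      simp_rw [Finset.mul_sum]
      rw [Finset.sum_comm]
      refine Finset.sum_congr rfl fun i _ => ?_
      exact Finset.sum_congr rfl fun x _ => by ring
    have e3 : (∑ x : X, h' x * ∑ i ∈ Finset.Ico b m, f₃ i y z * g₃ i x) = 0 := by
      simp_rw [Finset.mul_sum]
      rw [Finset.sum_comm]
      refine Finset.sum_eq_zero fun i hi => ?_
      have h0 := hthird i hi
      calc ∑ x : X, h' x * (f₃ i y z * g₃ i x)
          = f₃ i y z * ∑ x : X, h' x * g₃ i x := by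
            rw [Finset.mul_sum]
            exact Finset.sum_congr rfl fun x _ => by ring
        _ = 0 := by rw [h0, mul_zero]
    have hPQ : (P * Q) y z =
        (∑ i ∈ Finset.range a, (∑ x : X, h' x * f₁ i x y) * g₁ i z)
        + ∑ i ∈ Finset.Ico a b, g₂ i y * (∑ x : X, h' x * f₂ i x z) := by
      have hfin : ∀ i : Fin b, P y i * Q i z =
          (fun j : ℕ => if j < a then (∑ x : X, h' x * f₁ j x y) * g₁ j z
            else g₂ j y * (∑ x : X, h' x * f₂ j x z)) i.1 := by
        intro i
        by_cases h : i.1 < a <;> simp [P, Q, h]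
      rw [Matrix.mul_apply, Finset.sum_congr rfl (fun i _ => hfin i),
        ← Finset.sum_range (f := fun j : ℕ => if j < a then
            (∑ x : X, h' x * f₁ j x y) * g₁ j z
          else g₂ j y * (∑ x : X, h' x * f₂ j x z)),
        ← Finset.sum_range_add_sum_Ico _ hab]
      congr 1
      · exact Finset.sum_congr rfl fun i hi => if_pos (Finset.mem_range.mp hi)
      · refine Finset.sum_congr rfl fun i hi => if_neg ?_
        have := (Finset.mem_Ico.mp hi).1
        omega
    rw [hMyz, hPQ]
    simp_rw [mul_add, Finset.sum_add_distrib]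
    rw [e1, e2, e3, add_zero]
  have hrankup : M.rank ≤ b := by
    rw [hMPQ]
    calc (P * Q).rank ≤ P.rank := Matrix.rank_mul_le_left P Q
      _ ≤ Fintype.card (Fin b) := Matrix.rank_le_card_width P
      _ = b := Fintype.card_fin b
  omega

example : True := trivial

theorem slice_upper {X 𝔽 : Type*} [Fintype X] [DecidableEq X] [Field 𝔽]
    (A : Finset X) (c : X → 𝔽) :
    HasSliceDecomp
      (fun x₁ x₂ x₃ => ∑ a ∈ A, c a * (if x₁ = a then (1 : 𝔽) else 0) *
        (if x₂ = a then (1 : 𝔽) else 0) * (if x₃ = a then (1 : 𝔽) else 0)) A.card := by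
  classical
  refine ⟨A.card, A.card, le_rfl, le_rfl,
    (fun i x y => if h : i < A.card then
        c ((A.equivFin.symm ⟨i, h⟩ : ↥A) : X) *
        (if x = ((A.equivFin.symm ⟨i, h⟩ : ↥A) : X) then (1:𝔽) else 0) *
        (if y = ((A.equivFin.symm ⟨i, h⟩ : ↥A) : X) then (1:𝔽) else 0) else 0),
    (fun i z => if h : i < A.card then
        (if z = ((A.equivFin.symm ⟨i, h⟩ : ↥A) : X) then (1:𝔽) else 0) else 0),
    fun _ _ _ => 0, fun _ _ => 0, fun _ _ _ => 0, fun _ _ => 0, ?_⟩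
  intro x y z
  simp only [Finset.Ico_self, Finset.sum_empty, add_zero, zero_mul, Finset.sum_const_zero]
  rw [Finset.sum_range (n := A.card)]
  have hpt : ∀ i : Fin A.card,
      (if h : (i : ℕ) < A.card then
        c ((A.equivFin.symm ⟨i, h⟩ : ↥A) : X) *
        (if x = ((A.equivFin.symm ⟨i, h⟩ : ↥A) : X) then (1:𝔽) else 0) *
        (if y = ((A.equivFin.symm ⟨i, h⟩ : ↥A) : X) then (1:𝔽) else 0) else 0) *
      (if h : (i : ℕ) < A.card then
        (if z = ((A.equivFin.symm ⟨i, h⟩ : ↥A) : X) then (1:𝔽) else 0) else 0) =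
      (fun p : ↥A => c (p : X) * (if x = (p : X) then (1:𝔽) else 0) *
        (if y = (p : X) then (1:𝔽) else 0) * (if z = (p : X) then (1:𝔽) else 0))
        (A.equivFin.symm i) := by
    intro i
    rw [dif_pos i.2, dif_pos i.2]
  rw [Finset.sum_congr rfl (fun i _ => hpt i),
    Equiv.sum_comp A.equivFin.symm (fun p : ↥A =>
      c (p : X) * (if x = (p : X) then (1:𝔽) else 0) *
        (if y = (p : X) then (1:𝔽) else 0) * (if z = (p : X) then (1:𝔽) else 0))]
  exact (Finset.sum_coe_sort A (fun p => c p * (if x = p then (1:𝔽) else 0) *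
    (if y = p then (1:𝔽) else 0) * (if z = p then (1:𝔽) else 0))).symm

/-- **Tao's lemma:** a diagonal tensor with nonzero diagonal entries indexed by `A`
has slice rank exactly `|A|`: any slice decomposition has size at least `|A|`, and a
decomposition of size `|A|` exists. -/
theorem slice_rank_of_diagonal {X 𝔽 : Type*} [Fintype X] [DecidableEq X] [Field 𝔽]
    (A : Finset X) (c : X → 𝔽) (hc : ∀ a ∈ A, c a ≠ 0) :
    (∀ m : ℕ,
        HasSliceDecomp
          (fun x₁ x₂ x₃ => ∑ a ∈ A, c a * (if x₁ = a then (1 : 𝔽) else 0) *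
            (if x₂ = a then (1 : 𝔽) else 0) * (if x₃ = a then (1 : 𝔽) else 0)) m →
        A.card ≤ m) ∧
    HasSliceDecomp
      (fun x₁ x₂ x₃ => ∑ a ∈ A, c a * (if x₁ = a then (1 : 𝔽) else 0) *
        (if x₂ = a then (1 : 𝔽) else 0) * (if x₃ = a then (1 : 𝔽) else 0)) A.card := by
  exact ⟨fun m hm => slice_rank_lower A c hc m hm, slice_upper A c⟩
end

section
/- Let n and k be natural numbers with k ≤ n/2, and let x, y, z ∈ {0,1}^n ⊂ ℝ^n each have exactly k coordinates equal to 1. If there is no index i with x_i + y_i + z_i = 1, then the three squared Euclidean distances ‖x−y‖², ‖y−z‖², ‖z−x‖² are all equal, and their common value is at most k. -/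
lemma normsq_aux (n : ℕ) (u v : EuclideanSpace ℝ (Fin n))
    (hu : ∀ i, u i = 0 ∨ u i = 1) (hv : ∀ i, v i = 0 ∨ v i = 1) :
    ‖u - v‖ ^ 2 = ((Finset.univ.filter fun i => u i ≠ v i).card : ℝ) := by
  rw [EuclideanSpace.norm_eq, Real.sq_sqrt (Finset.sum_nonneg fun i _ => sq_nonneg _),
    Finset.card_filter, Nat.cast_sum]
  refine Finset.sum_congr rfl fun i _ => ?_
  have huv : (u - v) i = u i - v i := rfl
  rw [huv]
  rcases hu i with h1 | h1 <;> rcases hv i with h2 | h2 <;> simp [h1, h2]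

lemma sdiff_aux (n : ℕ) (u v w : EuclideanSpace ℝ (Fin n))
    (hv : ∀ i, v i = 0 ∨ v i = 1) (hw : ∀ i, w i = 0 ∨ w i = 1)
    (h : ∀ i, u i + v i + w i ≠ 1) :
    (Finset.univ.filter fun i => u i = 1) \ (Finset.univ.filter fun i => v i = 1)
      = ((Finset.univ.filter fun i => w i = 1) ∩ (Finset.univ.filter fun i => u i = 1))
        \ (Finset.univ.filter fun i => v i = 1) := by
  ext i
  simp only [Finset.mem_sdiff, Finset.mem_inter, Finset.mem_filter, Finset.mem_univ, true_and]
  constructor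
  · rintro ⟨h1, h2⟩
    refine ⟨⟨?_, h1⟩, h2⟩
    have hv0 : v i = 0 := (hv i).resolve_right h2
    rcases hw i with hw0 | hw1
    · exact absurd (by rw [h1, hv0, hw0]; ring) (h i)
    · exact hw1
  · rintro ⟨⟨_, h1⟩, h2⟩; exact ⟨h1, h2⟩

lemma card_ne_aux (n : ℕ) (u v : EuclideanSpace ℝ (Fin n))
    (hu : ∀ i, u i = 0 ∨ u i = 1) (hv : ∀ i, v i = 0 ∨ v i = 1) :
    (Finset.univ.filter fun i => u i ≠ v i)
      = ((Finset.univ.filter fun i => u i = 1) \ (Finset.univ.filter fun i => v i = 1))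
        ∪ ((Finset.univ.filter fun i => v i = 1) \ (Finset.univ.filter fun i => u i = 1)) := by
  ext i
  simp only [Finset.mem_union, Finset.mem_sdiff, Finset.mem_filter, Finset.mem_univ, true_and]
  rcases hu i with h1 | h1 <;> rcases hv i with h2 | h2 <;> simp [h1, h2]

/-- If `x, y, z ∈ {0,1}^n` each have exactly `k ≤ n/2` ones and no coordinate sums
to `1`, then the three squared distances agree and are at most `k`. -/
theorem equilateral_of_no_coordinate_sum_one (n k : ℕ) (hk : 2 * k ≤ n)
    (x y z : EuclideanSpace ℝ (Fin n))
    (hx01 : ∀ i, x i = 0 ∨ x i = 1) (hy01 : ∀ i, y i = 0 ∨ y i = 1)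
    (hz01 : ∀ i, z i = 0 ∨ z i = 1)
    (hxk : (Finset.univ.filter fun i => x i = 1).card = k)
    (hyk : (Finset.univ.filter fun i => y i = 1).card = k)
    (hzk : (Finset.univ.filter fun i => z i = 1).card = k)
    (h : ∀ i, x i + y i + z i ≠ 1) :
    ‖x - y‖ ^ 2 = ‖y - z‖ ^ 2 ∧ ‖y - z‖ ^ 2 = ‖z - x‖ ^ 2 ∧ ‖x - y‖ ^ 2 ≤ (k : ℝ) := by
  classical
  set A := Finset.univ.filter fun i => x i = 1 with hA
  set B := Finset.univ.filter fun i => y i = 1 with hB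
  set C := Finset.univ.filter fun i => z i = 1 with hC
  -- permuted versions of h
  have hyzx : ∀ i, y i + z i + x i ≠ 1 := fun i hc => h i (by linarith)
  have hzxy : ∀ i, z i + x i + y i ≠ 1 := fun i hc => h i (by linarith)
  have hxzy : ∀ i, x i + z i + y i ≠ 1 := fun i hc => h i (by linarith)
  have hyxz : ∀ i, y i + x i + z i ≠ 1 := fun i hc => h i (by linarith)
  have hzyx : ∀ i, z i + y i + x i ≠ 1 := fun i hc => h i (by linarith)
  -- the six sdiff identities
  have e1 : A \ B = (C ∩ A) \ B := sdiff_aux n x y z hy01 hz01 h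
  have e2 : B \ A = (C ∩ B) \ A := sdiff_aux n y x z hx01 hz01 hyxz
  have e3 : B \ C = (A ∩ B) \ C := sdiff_aux n y z x hz01 hx01 hyzx
  have e4 : C \ B = (A ∩ C) \ B := sdiff_aux n z y x hy01 hx01 hzyx
  have e5 : A \ C = (B ∩ A) \ C := sdiff_aux n x z y hz01 hy01 hxzy
  have e6 : C \ A = (B ∩ C) \ A := sdiff_aux n z x y hx01 hy01 hzxy
  set P := (A ∩ B) \ C with hP
  set Q := (B ∩ C) \ A with hQ
  set R := (C ∩ A) \ B with hR
  -- note (C ∩ B) \ A = Q, (A ∩ C) \ B = R, (B ∩ A) \ C = P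
  have e2' : B \ A = Q := by rw [e2, Finset.inter_comm]
  have e4' : C \ B = R := by rw [e4, Finset.inter_comm]
  have e5' : A \ C = P := by rw [e5, Finset.inter_comm]
  -- card splitting: |S| = |S ∩ T| + |S \ T|
  have kA : (A ∩ B).card + R.card = k := by rw [← e1, Finset.card_inter_add_card_sdiff, hxk]
  have kB : (B ∩ A).card + Q.card = k := by rw [← e2', Finset.card_inter_add_card_sdiff, hyk]
  have kB' : (B ∩ C).card + P.card = k := by rw [← e3, Finset.card_inter_add_card_sdiff, hyk]
  have kC : (C ∩ B).card + R.card = k := by rw [← e4', Finset.card_inter_add_card_sdiff, hzk]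
  have hQR : Q.card = R.card := by
    rw [Finset.inter_comm] at kB; omega
  have hPR : P.card = R.card := by
    rw [Finset.inter_comm] at kC; omega
  have memA : ∀ {i}, i ∈ A ↔ x i = 1 := fun {i} => by simp [hA]
  have memB : ∀ {i}, i ∈ B ↔ y i = 1 := fun {i} => by simp [hB]
  have memC : ∀ {i}, i ∈ C ↔ z i = 1 := fun {i} => by simp [hC]
  have disRQ : Disjoint R Q := Finset.disjoint_left.mpr fun i hi hj =>
    (Finset.mem_sdiff.mp hj).2 (Finset.mem_inter.mp (Finset.mem_sdiff.mp hi).1).2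
  have disPR : Disjoint P R := Finset.disjoint_left.mpr fun i hi hj =>
    (Finset.mem_sdiff.mp hj).2 (Finset.mem_inter.mp (Finset.mem_sdiff.mp hi).1).2
  have disQP : Disjoint Q P := Finset.disjoint_left.mpr fun i hi hj =>
    (Finset.mem_sdiff.mp hj).2 (Finset.mem_inter.mp (Finset.mem_sdiff.mp hi).1).2
  have dxy : ‖x - y‖ ^ 2 = ((R.card + Q.card : ℕ) : ℝ) := by
    rw [normsq_aux n x y hx01 hy01, card_ne_aux n x y hx01 hy01, ← hA, ← hB, e1, e2',
      Finset.card_union_of_disjoint disRQ]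
  have dyz : ‖y - z‖ ^ 2 = ((P.card + R.card : ℕ) : ℝ) := by
    rw [normsq_aux n y z hy01 hz01, card_ne_aux n y z hy01 hz01, ← hB, ← hC, e3, e4',
      Finset.card_union_of_disjoint (disPR)]
  have dzx : ‖z - x‖ ^ 2 = ((Q.card + P.card : ℕ) : ℝ) := by
    rw [normsq_aux n z x hz01 hx01, card_ne_aux n z x hz01 hx01, ← hC, ← hA, e6, e5',
      Finset.card_union_of_disjoint disQP]
  refine ⟨?_, ?_, ?_⟩
  · rw [dxy, dyz]; congr 1; omega
  · rw [dyz, dzx]; congr 1; omega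
  · rw [dxy]
    have hsub : P ⊆ A ∩ B := Finset.sdiff_subset
    have h1 : P.card ≤ (A ∩ B).card := Finset.card_le_card hsub
    have hle : R.card + Q.card ≤ k := by omega
    exact_mod_cast hle
end

section
/- Let n and k be natural numbers with k ≤ n/2, let p be an odd prime with p > k/4, and let S ⊂ {0,1}^n ⊂ ℝ^n be the set of vectors with exactly k coordinates equal to 1. Define H : S × S × S → ℤ/pℤ by H(x,y,z) = (∏_{i=1}^{n} (x_i + y_i + z_i − 1)) · (1 − (‖x−y‖²/2)^{p−1}), where the integer values x_i + y_i + z_i − 1 and ‖x−y‖²/2 (which is an integer for x, y ∈ S) are reduced modulo p. Then: (a) H(x,x,x) ≠ 0 for every x ∈ S; and (b) if H(x,y,z) ≠ 0 and it is not the case that x = y = z, then ‖x−y‖² = ‖y−z‖² = ‖z−x‖² = 2p. -/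
/-- The tensor `H(x,y,z) = (∏ᵢ (xᵢ + yᵢ + zᵢ - 1)) · (1 - (‖x-y‖²/2)^(p-1))` with
values in `ℤ/pℤ`: the integer values `xᵢ + yᵢ + zᵢ - 1` and `‖x-y‖²/2` (an integer
for `x, y ∈ S`, recovered here via the floor function) are reduced modulo `p`. -/
noncomputable def triangleTensor (n p : ℕ) (x y z : EuclideanSpace ℝ (Fin n)) :
    ZMod p :=
  (∏ i : Fin n, (((⌊x i + y i + z i⌋ : ℤ) : ZMod p) - 1)) *
    (1 - ((⌊‖x - y‖ ^ 2 / 2⌋ : ℤ) : ZMod p) ^ (p - 1))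

/-!
If `H(x,y,z) ≠ 0`, no coordinate has exactly one of `xᵢ, yᵢ, zᵢ` equal to `1`, so each of the
supports `A, B, C` is covered by its intersections with the other two. Inclusion–exclusion then
forces `|A ∩ B| = |B ∩ C| = |C ∩ A| = c` with `2c = k + |A ∩ B ∩ C|`, so all three squared
distances equal `2(k - c) ≤ k < 4p`. By Fermat the second factor vanishes unless `p ∣ k - c`,
leaving `k - c ∈ {0, p}`, and `k - c = 0` means `x = y = z`. On the diagonal every factor
`3xᵢ - 1` is `-1` or `2`, which is nonzero because `p` is odd.
-/

open Finset

theorem Finset.card_inter_add_card_inter_of_subset_union {α : Type*} [DecidableEq α]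
    {A B C : Finset α} (h : A ⊆ B ∪ C) :
    #(A ∩ B) + #(A ∩ C) = #A + #(A ∩ B ∩ C) := by
  rw [← card_union_add_card_inter, ← inter_union_distrib_left, inter_eq_left.mpr h,
    ← inter_inter_distrib_left, inter_assoc]

theorem Finset.card_inter_eq_of_subset_union {α : Type*} [DecidableEq α] {A B C : Finset α}
    {k : ℕ} (hA : A ⊆ B ∪ C) (hB : B ⊆ C ∪ A) (hC : C ⊆ A ∪ B)
    (hAk : #A = k) (hBk : #B = k) (hCk : #C = k) :
    #(B ∩ C) = #(A ∩ B) ∧ #(C ∩ A) = #(A ∩ B) ∧ 2 * #(A ∩ B) = k + #(A ∩ B ∩ C) := by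
  have eA := card_inter_add_card_inter_of_subset_union hA
  have eB := card_inter_add_card_inter_of_subset_union hB
  have eC := card_inter_add_card_inter_of_subset_union hC
  rw [inter_comm A C] at eA
  rw [inter_comm B A, show B ∩ C ∩ A = A ∩ B ∩ C by rw [inter_comm, inter_assoc]] at eB
  rw [inter_comm C B, show C ∩ A ∩ B = A ∩ B ∩ C by rw [inter_assoc, inter_comm]] at eC
  omega

theorem Nat.eq_zero_or_eq_of_dvd_of_lt_two_mul {p d : ℕ} (hd : p ∣ d) (hlt : d < 2 * p) :
    d = 0 ∨ d = p := by
  obtain ⟨e, rfl⟩ := hd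
  have : e < 2 := Nat.lt_of_mul_lt_mul_left (a := p) (by omega)
  interval_cases e <;> simp

theorem ZMod.eq_zero_of_one_sub_pow_card_sub_one_ne_zero {p : ℕ} [Fact p.Prime] {a : ZMod p}
    (h : 1 - a ^ (p - 1) ≠ 0) : a = 0 := by
  by_contra ha
  exact h (by rw [ZMod.pow_card_sub_one_eq_one ha, sub_self])

namespace BinaryVector

variable {n : ℕ}

def IsBinary (x : EuclideanSpace ℝ (Fin n)) : Prop := ∀ i, x i = 0 ∨ x i = 1

noncomputable def ones (x : EuclideanSpace ℝ (Fin n)) : Finset (Fin n) :=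
  univ.filter fun i => x i = 1

variable {x y z : EuclideanSpace ℝ (Fin n)}

theorem mem_ones {i : Fin n} : i ∈ ones x ↔ x i = 1 := by simp [ones]

theorem IsBinary.apply_eq_ite (hx : IsBinary x) (i : Fin n) :
    x i = if i ∈ ones x then 1 else 0 := by
  rcases hx i with h | h <;> simp [mem_ones, h]

theorem IsBinary.sum_mul_eq_card_inter (hx : IsBinary x) (hy : IsBinary y) :
    ∑ i, x i * y i = #(ones x ∩ ones y) := by
  simp_rw [hx.apply_eq_ite, hy.apply_eq_ite, ite_zero_mul_ite_zero, one_mul, ← mem_inter,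
    sum_boole, filter_mem_eq_inter, univ_inter]

theorem IsBinary.norm_sub_sq (hx : IsBinary x) (hy : IsBinary y) :
    ‖x - y‖ ^ 2 = #(ones x) + #(ones y) - 2 * #(ones x ∩ ones y) := by
  have hsq : ∀ i, (x - y) i ^ 2 = x i * x i + y i * y i - 2 * (x i * y i) := fun i => by
    simp only [PiLp.sub_apply]; ring
  rw [EuclideanSpace.real_norm_sq_eq]
  simp_rw [hsq, sum_sub_distrib, sum_add_distrib, ← mul_sum, hx.sum_mul_eq_card_inter hx,
    hy.sum_mul_eq_card_inter hy, hx.sum_mul_eq_card_inter hy, inter_self]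

theorem ones_subset_union (hy : IsBinary y) (hz : IsBinary z) (h : ∀ i, x i + y i + z i ≠ 1) :
    ones x ⊆ ones y ∪ ones z := by
  intro i hi
  rw [mem_ones] at hi
  rw [mem_union, mem_ones, mem_ones]
  by_contra! hyz
  exact h i (by rw [hi, (hy i).resolve_right hyz.1, (hz i).resolve_right hyz.2]; norm_num)

theorem IsBinary.exists_norm_sub_sq_eq_of_sum_ne_one {k : ℕ} (hx : IsBinary x)
    (hy : IsBinary y) (hz : IsBinary z) (hxk : #(ones x) = k) (hyk : #(ones y) = k)
    (hzk : #(ones z) = k) (h : ∀ i, x i + y i + z i ≠ 1) :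
    ∃ d : ℕ, 2 * d ≤ k ∧ ‖x - y‖ ^ 2 = 2 * d ∧ ‖y - z‖ ^ 2 = 2 * d ∧ ‖z - x‖ ^ 2 = 2 * d := by
  have hX := ones_subset_union hy hz h
  have hY := ones_subset_union hz hx fun i => by rw [← add_rotate]; exact h i
  have hZ := ones_subset_union hx hy fun i => by rw [add_rotate]; exact h i
  obtain ⟨hyz, hzx, hxy⟩ := card_inter_eq_of_subset_union hX hY hZ hxk hyk hzk
  have hck : #(ones x ∩ ones y) ≤ k := hxk ▸ card_le_card inter_subset_left
  refine ⟨k - #(ones x ∩ ones y), by omega, ?_, ?_, ?_⟩ <;>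
  · rw [IsBinary.norm_sub_sq ‹_› ‹_›]
    simp only [hxk, hyk, hzk, hyz, hzx, Nat.cast_sub hck]
    ring

end BinaryVector

open BinaryVector

section TriangleTensor

variable {n p : ℕ} {x y z : EuclideanSpace ℝ (Fin n)}

theorem triangleTensor_self_ne_zero [Fact p.Prime] (hp : p ≠ 2) (hx : IsBinary x) :
    triangleTensor n p x x x ≠ 0 := by
  have h2 : (2 : ZMod p) ≠ 0 := Ring.two_ne_zero (by rwa [ZMod.ringChar_zmod_n])
  refine mul_ne_zero (prod_ne_zero_iff.mpr fun i _ => ?_) ?_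
  · rcases hx i with h | h <;> norm_num [h, h2]
  · simp [zero_pow (Nat.sub_ne_zero_of_lt (Fact.out : p.Prime).one_lt)]

theorem sum_ne_one_of_triangleTensor_ne_zero (h : triangleTensor n p x y z ≠ 0) (i : Fin n) :
    x i + y i + z i ≠ 1 := by
  intro hi
  refine h (mul_eq_zero_of_left (prod_eq_zero (mem_univ i) ?_) _)
  simp [hi]

theorem dvd_of_triangleTensor_ne_zero [Fact p.Prime] {d : ℕ} (hd : ‖x - y‖ ^ 2 = 2 * d)
    (h : triangleTensor n p x y z ≠ 0) : p ∣ d := by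
  have hfloor : ⌊‖x - y‖ ^ 2 / 2⌋ = d := by
    rw [hd, mul_div_cancel_left₀ _ two_ne_zero, Int.floor_natCast]
  rw [← ZMod.natCast_eq_zero_iff]
  apply ZMod.eq_zero_of_one_sub_pow_card_sub_one_ne_zero
  simpa [triangleTensor, hfloor] using right_ne_zero_of_mul h

end TriangleTensor

theorem triangleTensor_diagonal_and_support_general (n k p : ℕ)
    (hp : p.Prime) (hodd : Odd p) (hpk : (k : ℝ) / 4 < p)
    (x y z : EuclideanSpace ℝ (Fin n))
    (hx01 : ∀ i, x i = 0 ∨ x i = 1) (hy01 : ∀ i, y i = 0 ∨ y i = 1)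
    (hz01 : ∀ i, z i = 0 ∨ z i = 1)
    (hxk : (Finset.univ.filter fun i => x i = 1).card = k)
    (hyk : (Finset.univ.filter fun i => y i = 1).card = k)
    (hzk : (Finset.univ.filter fun i => z i = 1).card = k) :
    triangleTensor n p x x x ≠ 0 ∧
    (triangleTensor n p x y z ≠ 0 → ¬(x = y ∧ y = z) →
      ‖x - y‖ ^ 2 = 2 * (p : ℝ) ∧ ‖y - z‖ ^ 2 = 2 * (p : ℝ) ∧
      ‖z - x‖ ^ 2 = 2 * (p : ℝ)) := by
  have := Fact.mk hp
  refine ⟨triangleTensor_self_ne_zero (hodd.ne_two_of_dvd_nat dvd_rfl) hx01, fun hH hne => ?_⟩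
  obtain ⟨d, hdk, hxy, hyz, hzx⟩ := IsBinary.exists_norm_sub_sq_eq_of_sum_ne_one hx01 hy01 hz01
    hxk hyk hzk (sum_ne_one_of_triangleTensor_ne_zero hH)
  have hkp : k < 4 * p := by exact_mod_cast (by linarith : (k : ℝ) < 4 * p)
  rcases Nat.eq_zero_or_eq_of_dvd_of_lt_two_mul (dvd_of_triangleTensor_ne_zero hxy hH)
    (by omega) with rfl | rfl
  · exact absurd ⟨by simpa [sub_eq_zero] using hxy, by simpa [sub_eq_zero] using hyz⟩ hne
  · exact ⟨hxy, hyz, hzx⟩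

/-- For `k ≤ n/2`, `p` an odd prime with `p > k/4`, and `x, y, z` in the set `S` of
`{0,1}`-vectors with exactly `k` ones: (a) `H(x,x,x) ≠ 0`; (b) if `H(x,y,z) ≠ 0` and
not `x = y = z`, then `x, y, z` form an equilateral triangle of side `√(2p)`. -/
theorem triangleTensor_diagonal_and_support (n k p : ℕ) (hk : 2 * k ≤ n)
    (hp : p.Prime) (hodd : Odd p) (hpk : (k : ℝ) / 4 < p)
    (x y z : EuclideanSpace ℝ (Fin n))
    (hx01 : ∀ i, x i = 0 ∨ x i = 1) (hy01 : ∀ i, y i = 0 ∨ y i = 1)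
    (hz01 : ∀ i, z i = 0 ∨ z i = 1)
    (hxk : (Finset.univ.filter fun i => x i = 1).card = k)
    (hyk : (Finset.univ.filter fun i => y i = 1).card = k)
    (hzk : (Finset.univ.filter fun i => z i = 1).card = k) :
    triangleTensor n p x x x ≠ 0 ∧
    (triangleTensor n p x y z ≠ 0 → ¬(x = y ∧ y = z) →
      ‖x - y‖ ^ 2 = 2 * (p : ℝ) ∧ ‖y - z‖ ^ 2 = 2 * (p : ℝ) ∧
      ‖z - x‖ ^ 2 = 2 * (p : ℝ)) :=
  triangleTensor_diagonal_and_support_general n k p hp hodd hpk x y z hx01 hy01 hz01 hxk hyk hzk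
end

section
/- Let n and k be natural numbers with k ≤ n/2, let p be an odd prime with p > k/4, and let S ⊂ {0,1}^n ⊂ ℝ^n be the set of vectors with exactly k coordinates equal to 1. Define H : S × S × S → ℤ/pℤ by H(x,y,z) = (∏_{i=1}^{n} (x_i + y_i + z_i − 1)) · (1 − (‖x−y‖²/2)^{p−1}), with integer values reduced modulo p. Then H admits a slice decomposition of size at most 3 · #{v ∈ {0,1}^n : Σ_{i=1}^{n} v_i ≤ (n + 2p)/3}. -/
open Finset MvPolynomial

namespace TriSlice

/-! ### Auxiliary material for the slice-decomposition theorem -/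

abbrev Var (n : ℕ) := Sum (Fin n) (Sum (Fin n) (Fin n))

lemma tdX_le {R σ : Type*} [CommSemiring R] (s : σ) :
    (X s : MvPolynomial σ R).totalDegree ≤ 1 := by
  rw [X]
  exact (totalDegree_monomial_le _ _).trans (by simp)

noncomputable def QQ (n k p : ℕ) : MvPolynomial (Var n) (ZMod p) :=
  (∏ i : Fin n, (X (Sum.inl i) + X (Sum.inr (Sum.inl i)) + X (Sum.inr (Sum.inr i)) - 1)) *
  (1 - (C (k : ZMod p) - ∑ i : Fin n, X (Sum.inl i) * X (Sum.inr (Sum.inl i))) ^ (p - 1))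

lemma QQ_totalDegree (n k p : ℕ) : (QQ n k p).totalDegree ≤ n + (p - 1) * 2 := by
  refine (totalDegree_mul _ _).trans (add_le_add ?_ ?_)
  · refine (totalDegree_finset_prod _ _).trans ?_
    have h1 : ∀ i : Fin n,
        (X (Sum.inl i) + X (Sum.inr (Sum.inl i)) + X (Sum.inr (Sum.inr i)) -
          (1 : MvPolynomial (Var n) (ZMod p))).totalDegree ≤ 1 := by
      intro i
      have : (X (Sum.inl i) + X (Sum.inr (Sum.inl i)) + X (Sum.inr (Sum.inr i)) -
          (1 : MvPolynomial (Var n) (ZMod p))) =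
          X (Sum.inl i) + X (Sum.inr (Sum.inl i)) + X (Sum.inr (Sum.inr i)) + C (-1) := by
        rw [map_neg, map_one]; ring
      rw [this]
      refine (totalDegree_add _ _).trans (max_le ((totalDegree_add _ _).trans (max_le
        ((totalDegree_add _ _).trans (max_le ?_ ?_)) ?_)) ?_)
      · exact tdX_le _
      · exact tdX_le _
      · exact tdX_le _
      · exact le_trans (le_of_eq (totalDegree_C _)) (by norm_num)
    refine le_trans (Finset.sum_le_sum fun i _ => h1 i) ?_
    simp
  · have h2 : ((C (k : ZMod p) - ∑ i : Fin n, X (Sum.inl i) * X (Sum.inr (Sum.inl i)) :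
        MvPolynomial (Var n) (ZMod p))).totalDegree ≤ 2 := by
      have : (C (k : ZMod p) - ∑ i : Fin n, X (Sum.inl i) * X (Sum.inr (Sum.inl i)) :
          MvPolynomial (Var n) (ZMod p)) =
          C (k : ZMod p) + ∑ i : Fin n, (-1 : MvPolynomial (Var n) (ZMod p)) *
            (X (Sum.inl i) * X (Sum.inr (Sum.inl i))) := by
        rw [sub_eq_add_neg, ← Finset.sum_neg_distrib]
        congr 1
        exact Finset.sum_congr rfl fun i _ => by ring
      rw [this]
      refine (totalDegree_add _ _).trans (max_le
        (le_trans (le_of_eq (totalDegree_C _)) (by norm_num)) ?_)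
      refine (totalDegree_finset_sum _ _).trans ?_
      refine Finset.sup_le fun i _ => ?_
      refine (totalDegree_mul _ _).trans ?_
      have : ((-1 : MvPolynomial (Var n) (ZMod p))).totalDegree = 0 := by
        rw [totalDegree_neg, totalDegree_one]
      rw [this, zero_add]
      refine (totalDegree_mul _ _).trans ?_
      have := tdX_le (R := ZMod p) (Sum.inl i : Var n)
      have := tdX_le (R := ZMod p) (Sum.inr (Sum.inl i) : Var n)
      omega
    calc ((1 : MvPolynomial (Var n) (ZMod p)) -
          (C (k : ZMod p) - ∑ i : Fin n, X (Sum.inl i) * X (Sum.inr (Sum.inl i))) ^ (p-1)).totalDegree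
        ≤ max (totalDegree (1 : MvPolynomial (Var n) (ZMod p)))
            (((C (k : ZMod p) - ∑ i : Fin n, X (Sum.inl i) * X (Sum.inr (Sum.inl i))) ^ (p-1)).totalDegree) := by
          rw [sub_eq_add_neg]
          refine (totalDegree_add _ _).trans (max_le_max le_rfl ?_)
          rw [totalDegree_neg]
      _ ≤ (p - 1) * 2 := by
          refine max_le (le_trans (le_of_eq totalDegree_one) (Nat.zero_le _)) ?_
          exact (totalDegree_pow _ _).trans (Nat.mul_le_mul_left _ h2)

lemma eval_boolean {σ R : Type*} [CommSemiring R] (q : MvPolynomial σ R) (w : σ → R)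
    (hw : ∀ j, w j = 0 ∨ w j = 1) :
    eval w q = ∑ d ∈ q.support, coeff d q * ∏ j ∈ d.support, w j := by
  rw [eval_eq]
  refine Finset.sum_congr rfl fun d _ => ?_
  congr 1
  refine Finset.prod_congr rfl fun j hj => ?_
  have hd : d j ≠ 0 := Finsupp.mem_support_iff.mp hj
  rcases hw j with h | h <;> simp [h, zero_pow hd]

/-- monomial function attached to a 0/1-vector -/
def mon {n p : ℕ} (v : Fin n → Fin 2) (a : Fin n → ZMod p) : ZMod p :=
  ∏ i ∈ Finset.univ.filter (fun i => v i = 1), a i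

variable {n k p : ℕ}

def Xvec (d : Var n →₀ ℕ) : Fin n → Fin 2 := fun i => if d (Sum.inl i) ≠ 0 then 1 else 0
def Yvec (d : Var n →₀ ℕ) : Fin n → Fin 2 := fun i => if d (Sum.inr (Sum.inl i)) ≠ 0 then 1 else 0
def Zvec (d : Var n →₀ ℕ) : Fin n → Fin 2 := fun i => if d (Sum.inr (Sum.inr i)) ≠ 0 then 1 else 0

def wt (v : Fin n → Fin 2) : ℕ := ∑ i, (v i : ℕ)

lemma wt_def (v : Fin n → Fin 2) : wt v = ∑ i, (v i : ℕ) := rfl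

lemma prod_support_split (d : Var n →₀ ℕ) (a b c : Fin n → ZMod p) :
    (∏ j ∈ d.support, (Sum.elim a (Sum.elim b c)) j) =
      mon (Xvec d) a * mon (Yvec d) b * mon (Zvec d) c := by
  have hsupp : d.support = Finset.univ.filter (fun j => d j ≠ 0) := by
    ext j; simp [Finsupp.mem_support_iff]
  rw [hsupp, Finset.prod_filter, Fintype.prod_sum_type, Fintype.prod_sum_type, ← mul_assoc]
  congr 1
  · congr 1
    · rw [mon, Finset.prod_filter]
      refine Finset.prod_congr rfl fun i _ => ?_
      by_cases h : d (Sum.inl i) ≠ 0 <;> simp [Xvec, h]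
    · rw [mon, Finset.prod_filter]
      refine Finset.prod_congr rfl fun i _ => ?_
      by_cases h : d (Sum.inr (Sum.inl i)) ≠ 0 <;> simp [Yvec, h]
  · rw [mon, Finset.prod_filter]
    refine Finset.prod_congr rfl fun i _ => ?_
    by_cases h : d (Sum.inr (Sum.inr i)) ≠ 0 <;> simp [Zvec, h]

lemma wt_sum_le {q : MvPolynomial (Var n) (ZMod p)} {d : Var n →₀ ℕ}
    (hd : d ∈ q.support) :
    wt (Xvec d) + wt (Yvec d) + wt (Zvec d) ≤ q.totalDegree := by
  have h1 : wt (Xvec d) ≤ ∑ i : Fin n, d (Sum.inl i) := by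
    rw [wt]
    refine Finset.sum_le_sum fun i _ => ?_
    simp only [Xvec]
    by_cases h : d (Sum.inl i) ≠ 0 <;> simp [h] <;> omega
  have h2 : wt (Yvec d) ≤ ∑ i : Fin n, d (Sum.inr (Sum.inl i)) := by
    rw [wt]
    refine Finset.sum_le_sum fun i _ => ?_
    simp only [Yvec]
    by_cases h : d (Sum.inr (Sum.inl i)) ≠ 0 <;> simp [h] <;> omega
  have h3 : wt (Zvec d) ≤ ∑ i : Fin n, d (Sum.inr (Sum.inr i)) := by
    rw [wt]
    refine Finset.sum_le_sum fun i _ => ?_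
    simp only [Zvec]
    by_cases h : d (Sum.inr (Sum.inr i)) ≠ 0 <;> simp [h] <;> omega
  have htot : (∑ i : Fin n, d (Sum.inl i)) + ((∑ i : Fin n, d (Sum.inr (Sum.inl i))) +
      (∑ i : Fin n, d (Sum.inr (Sum.inr i)))) = ∑ j : Var n, d j := by
    rw [Fintype.sum_sum_type, Fintype.sum_sum_type]
  have hsum : (∑ j : Var n, d j) = d.sum fun _ e => e := by
    rw [Finsupp.sum]
    refine (Finset.sum_subset (Finset.subset_univ _) fun j _ hj => ?_).symm
    exact Finsupp.notMem_support_iff.mp hj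
  have := le_totalDegree hd
  omega

noncomputable def chiZ (w : EuclideanSpace ℝ (Fin n)) (i : Fin n) : ℤ := if w i = 1 then 1 else 0

noncomputable def chi (p : ℕ) (w : EuclideanSpace ℝ (Fin n)) (i : Fin n) : ZMod p :=
  ((chiZ w i : ℤ) : ZMod p)

lemma coord_eq {w : EuclideanSpace ℝ (Fin n)} (hw : ∀ i, w i = 0 ∨ w i = 1) (i : Fin n) :
    w i = ((chiZ w i : ℤ) : ℝ) := by
  rcases hw i with h | h <;> simp [chiZ, h]

lemma chiZ_mem {w : EuclideanSpace ℝ (Fin n)} (i : Fin n) : chiZ w i = 0 ∨ chiZ w i = 1 := by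
  rw [chiZ]; by_cases h : w i = 1 <;> simp [h]

lemma chi_mem {w : EuclideanSpace ℝ (Fin n)} (i : Fin n) : chi p w i = 0 ∨ chi p w i = 1 := by
  rcases chiZ_mem (w := w) i with h | h <;> simp [chi, h]

lemma sum_chiZ {w : EuclideanSpace ℝ (Fin n)}
    (hcard : (Finset.univ.filter fun i => w i = 1).card = k) :
    (∑ i, chiZ w i) = (k : ℤ) := by
  simp only [chiZ]
  rw [Finset.sum_boole, hcard]

lemma floor_sum {x y z : EuclideanSpace ℝ (Fin n)} (hx : ∀ i, x i = 0 ∨ x i = 1)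
    (hy : ∀ i, y i = 0 ∨ y i = 1) (hz : ∀ i, z i = 0 ∨ z i = 1) (i : Fin n) :
    ⌊x i + y i + z i⌋ = chiZ x i + chiZ y i + chiZ z i := by
  rw [coord_eq hx, coord_eq hy, coord_eq hz]
  push_cast
  exact_mod_cast Int.floor_intCast (chiZ x i + chiZ y i + chiZ z i)

lemma floor_norm {x y : EuclideanSpace ℝ (Fin n)} (hx : ∀ i, x i = 0 ∨ x i = 1)
    (hy : ∀ i, y i = 0 ∨ y i = 1)
    (hxc : (Finset.univ.filter fun i => x i = 1).card = k)
    (hyc : (Finset.univ.filter fun i => y i = 1).card = k) :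
    ⌊‖x - y‖ ^ 2 / 2⌋ = (k : ℤ) - ∑ i, chiZ x i * chiZ y i := by
  have hnorm : ‖x - y‖ ^ 2 = ∑ i, (x i - y i) ^ 2 := by
    rw [EuclideanSpace.norm_eq]
    rw [Real.sq_sqrt (by positivity)]
    refine Finset.sum_congr rfl fun i _ => ?_
    simp [Real.norm_eq_abs, sq_abs]
  have hterm : ∀ i, (x i - y i) ^ 2 =
      ((chiZ x i + chiZ y i - 2 * (chiZ x i * chiZ y i) : ℤ) : ℝ) := by
    intro i
    rw [coord_eq hx, coord_eq hy]
    rcases chiZ_mem (w := x) i with h1 | h1 <;> rcases chiZ_mem (w := y) i with h2 | h2 <;>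
      rw [h1, h2] <;> norm_num
  have : ‖x - y‖ ^ 2 = (((2 * k : ℤ) - 2 * ∑ i, chiZ x i * chiZ y i : ℤ) : ℝ) := by
    rw [hnorm]
    rw [Finset.sum_congr rfl fun i _ => hterm i]
    rw [← Int.cast_sum]
    congr 1
    rw [Finset.sum_sub_distrib, Finset.sum_add_distrib, sum_chiZ hxc, sum_chiZ hyc,
      ← Finset.mul_sum]
    ring
  rw [this]
  have : (((2 * k : ℤ) - 2 * ∑ i, chiZ x i * chiZ y i : ℤ) : ℝ) / 2 =
      (((k : ℤ) - ∑ i, chiZ x i * chiZ y i : ℤ) : ℝ) := by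
    push_cast
    ring
  rw [this, Int.floor_intCast]

lemma bridge (n k p : ℕ) (x y z : EuclideanSpace ℝ (Fin n))
    (hx : ∀ i, x i = 0 ∨ x i = 1) (hy : ∀ i, y i = 0 ∨ y i = 1) (hz : ∀ i, z i = 0 ∨ z i = 1)
    (hxc : (Finset.univ.filter fun i => x i = 1).card = k)
    (hyc : (Finset.univ.filter fun i => y i = 1).card = k) :
    triangleTensor n p x y z =
      eval (Sum.elim (chi p x) (Sum.elim (chi p y) (chi p z))) (QQ n k p) := by
  rw [QQ, triangleTensor]
  rw [map_mul, map_prod]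
  congr 1
  · refine Finset.prod_congr rfl fun i _ => ?_
    rw [map_sub, map_add, map_add, eval_X, eval_X, eval_X, map_one]
    simp only [Sum.elim_inl, Sum.elim_inr]
    rw [floor_sum hx hy hz]
    push_cast [chi]
    ring
  · rw [map_sub, map_one, map_pow, map_sub, eval_C, map_sum]
    congr 2
    rw [floor_norm hx hy hxc hyc]
    push_cast [chi]
    congr 1
    refine Finset.sum_congr rfl fun i _ => ?_
    rw [map_mul, eval_X, eval_X]
    simp [chi]

noncomputable def enum {α : Type*} [Inhabited α] (t : Finset α) (i : ℕ) : α :=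
  if h : i < t.card then (t.equivFin.symm ⟨i, h⟩ : {v // v ∈ t}).1 else default

lemma sum_enum {α M : Type*} [Inhabited α] [AddCommMonoid M] (t : Finset α)
    (F : α → M) : ∑ i ∈ Finset.range t.card, F (enum t i) = ∑ v ∈ t, F v := by
  rw [← Fin.sum_univ_eq_sum_range (fun i => F (enum t i)) t.card]
  have h1 : ∀ i : Fin t.card, F (enum t i.1) = F ((t.equivFin.symm i : {v // v ∈ t}).1) := by
    intro i
    rw [enum, dif_pos i.isLt]
  rw [Finset.sum_congr rfl fun i _ => h1 i]
  rw [← Finset.sum_coe_sort t F]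
  exact Equiv.sum_comp t.equivFin.symm (fun v => F v.1)

/-- group assignment: 2 = x-monomial small, 1 = y small, 0 = z small -/
def grp (n p : ℕ) (d : Var n →₀ ℕ) : Fin 3 :=
  if 3 * wt (Xvec d) ≤ n + 2 * p then 2
  else if 3 * wt (Yvec d) ≤ n + 2 * p then 1 else 0

lemma grp_eq_two {d : Var n →₀ ℕ} (h : grp n p d = 2) : 3 * wt (Xvec d) ≤ n + 2 * p := by
  by_contra hc
  rw [grp, if_neg hc] at h
  by_cases h2 : 3 * wt (Yvec d) ≤ n + 2 * p <;> simp [h2] at h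

lemma grp_eq_one {d : Var n →₀ ℕ} (h : grp n p d = 1) : 3 * wt (Yvec d) ≤ n + 2 * p := by
  by_contra hc
  rw [grp] at h
  by_cases h1 : 3 * wt (Xvec d) ≤ n + 2 * p <;> simp [h1, hc] at h

lemma grp_eq_zero {d : Var n →₀ ℕ} (hp1 : 1 ≤ p) (h : grp n p d = 0)
    (hd : d ∈ (QQ n k p).support) : 3 * wt (Zvec d) ≤ n + 2 * p := by
  rw [grp] at h
  by_cases h1 : 3 * wt (Xvec d) ≤ n + 2 * p
  · simp [h1] at h
  by_cases h2 : 3 * wt (Yvec d) ≤ n + 2 * p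
  · simp [h1, h2] at h
  have := (wt_sum_le hd).trans (QQ_totalDegree n k p)
  omega

end TriSlice

open TriSlice in
/-- The tensor `H`, restricted to the set `S` of `{0,1}`-vectors with exactly `k`
ones, admits a slice decomposition of size at most
`3 · #{v ∈ {0,1}^n : ∑ᵢ vᵢ ≤ (n + 2p)/3}`. -/
theorem triangleTensor_sliceDecomp (n k p : ℕ) [hp : Fact p.Prime] (hk : 2 * k ≤ n)
    (hodd : Odd p) (hpk : (k : ℝ) / 4 < p) :
    ∃ m : ℕ,
      m ≤ 3 * ((Finset.univ : Finset (Fin n → Fin 2)).filter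
        (fun v => ((∑ i, (v i : ℕ) : ℕ) : ℝ) ≤ ((n : ℝ) + 2 * p) / 3)).card ∧
      HasSliceDecomp
        (fun x y z : {w : EuclideanSpace ℝ (Fin n) //
            (∀ i, w i = 0 ∨ w i = 1) ∧ (Finset.univ.filter fun i => w i = 1).card = k} =>
          triangleTensor n p x.1 y.1 z.1) m := by
  classical
  have hp1 : 1 ≤ p := hp.out.one_lt.le.trans le_rfl |>.trans' (by omega)
  set t : Finset (Fin n → Fin 2) := (Finset.univ : Finset (Fin n → Fin 2)).filter
      (fun v => ((∑ i, (v i : ℕ) : ℕ) : ℝ) ≤ ((n : ℝ) + 2 * p) / 3) with ht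
  have hmem : ∀ v : Fin n → Fin 2, 3 * wt v ≤ n + 2 * p → v ∈ t := by
    intro v hv
    rw [ht, Finset.mem_filter]
    refine ⟨Finset.mem_univ _, ?_⟩
    rw [le_div_iff₀ (by norm_num : (0:ℝ) < 3)]
    have h1 : ((3 * wt v : ℕ) : ℝ) ≤ ((n + 2 * p : ℕ) : ℝ) := Nat.cast_le.mpr hv
    rw [wt_def] at h1
    push_cast at h1 ⊢
    linarith
  set Q := QQ n k p with hQ
  refine ⟨3 * t.card, le_rfl, t.card, 2 * t.card, by omega, by omega,
    (fun i x y => ∑ d ∈ Q.support.filter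
        (fun d => grp n p d = 0 ∧ Zvec d = enum t i),
      coeff d Q * (mon (Xvec d) (chi p x.1) * mon (Yvec d) (chi p y.1))),
    (fun i z => mon (enum t i) (chi p z.1)),
    (fun i x z => ∑ d ∈ Q.support.filter
        (fun d => grp n p d = 1 ∧ Yvec d = enum t (i - t.card)),
      coeff d Q * (mon (Xvec d) (chi p x.1) * mon (Zvec d) (chi p z.1))),
    (fun i y => mon (enum t (i - t.card)) (chi p y.1)),
    (fun i y z => ∑ d ∈ Q.support.filter
        (fun d => grp n p d = 2 ∧ Xvec d = enum t (i - 2 * t.card)),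
      coeff d Q * (mon (Yvec d) (chi p y.1) * mon (Zvec d) (chi p z.1))),
    (fun i x => mon (enum t (i - 2 * t.card)) (chi p x.1)), ?_⟩
  intro x y z
  show triangleTensor n p x.1 y.1 z.1 = _
  set a := chi p x.1 with ha
  set b := chi p y.1 with hb
  set c := chi p z.1 with hc
  set T : (Var n →₀ ℕ) → ZMod p :=
    fun d => coeff d Q * (mon (Xvec d) a * mon (Yvec d) b * mon (Zvec d) c) with hT
  -- LHS
  have hw : ∀ j, (Sum.elim a (Sum.elim b c)) j = 0 ∨ (Sum.elim a (Sum.elim b c)) j = 1 := by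
    intro j
    rcases j with i | i | i
    · exact chi_mem i
    · exact chi_mem i
    · exact chi_mem i
  have hLHS : triangleTensor n p x.1 y.1 z.1 = ∑ d ∈ Q.support, T d := by
    rw [bridge n k p x.1 y.1 z.1 x.2.1 y.2.1 z.2.1 x.2.2 y.2.2, ← hQ,
      eval_boolean _ _ hw]
    exact Finset.sum_congr rfl fun d _ => by rw [hT, prod_support_split]
  rw [hLHS]
  -- split into the three groups
  have hfin3 : ∀ g : Fin 3, (¬g = 0 ∧ ¬g = 1) ↔ g = 2 := by decide
  have hfin3' : ∀ g : Fin 3, (¬g = 0 ∧ g = 1) ↔ g = 1 := by decide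
  have hsplit : ∑ d ∈ Q.support, T d =
      (∑ d ∈ Q.support.filter (fun d => grp n p d = 0), T d) +
      (∑ d ∈ Q.support.filter (fun d => grp n p d = 1), T d) +
      (∑ d ∈ Q.support.filter (fun d => grp n p d = 2), T d) := by
    rw [← Finset.sum_filter_add_sum_filter_not Q.support (fun d => grp n p d = 0) T,
      ← Finset.sum_filter_add_sum_filter_not
        (Q.support.filter (fun d => ¬grp n p d = 0)) (fun d => grp n p d = 1) T,
      Finset.filter_filter, Finset.filter_filter]
    rw [Finset.filter_congr (fun d _ => hfin3' (grp n p d)),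
      Finset.filter_congr (fun d _ => hfin3 (grp n p d))]
    ring
  rw [hsplit]
  -- slot 1
  have hs1 : (∑ i ∈ Finset.range t.card,
      (∑ d ∈ Q.support.filter (fun d => grp n p d = 0 ∧ Zvec d = enum t i),
        coeff d Q * (mon (Xvec d) a * mon (Yvec d) b)) * mon (enum t i) c) =
      ∑ d ∈ Q.support.filter (fun d => grp n p d = 0), T d := by
    rw [sum_enum t (fun v => (∑ d ∈ Q.support.filter (fun d => grp n p d = 0 ∧ Zvec d = v),
      coeff d Q * (mon (Xvec d) a * mon (Yvec d) b)) * mon v c)]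
    rw [← Finset.sum_fiberwise_of_maps_to (g := Zvec)
      (fun d hd => hmem _ (grp_eq_zero hp1 (Finset.mem_filter.mp hd).2
        (Finset.mem_filter.mp hd).1)) T]
    refine Finset.sum_congr rfl fun v hv => ?_
    rw [Finset.filter_filter, Finset.sum_mul]
    refine Finset.sum_congr (by congr 1) fun d hd => ?_
    have hzv : Zvec d = v := (Finset.mem_filter.mp hd).2.2
    rw [hT, ← hzv]
    ring
  -- slot 2
  have hs2 : (∑ i ∈ Finset.Ico t.card (2 * t.card),
      (∑ d ∈ Q.support.filter (fun d => grp n p d = 1 ∧ Yvec d = enum t (i - t.card)),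
        coeff d Q * (mon (Xvec d) a * mon (Zvec d) c)) * mon (enum t (i - t.card)) b) =
      ∑ d ∈ Q.support.filter (fun d => grp n p d = 1), T d := by
    rw [Finset.sum_Ico_eq_sum_range]
    have h2 : 2 * t.card - t.card = t.card := by omega
    rw [h2]
    simp only [Nat.add_sub_cancel_left]
    rw [sum_enum t (fun v => (∑ d ∈ Q.support.filter (fun d => grp n p d = 1 ∧ Yvec d = v),
      coeff d Q * (mon (Xvec d) a * mon (Zvec d) c)) * mon v b)]
    rw [← Finset.sum_fiberwise_of_maps_to (g := Yvec)
      (fun d hd => hmem _ (grp_eq_one (Finset.mem_filter.mp hd).2)) T]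
    refine Finset.sum_congr rfl fun v hv => ?_
    rw [Finset.filter_filter, Finset.sum_mul]
    refine Finset.sum_congr (by congr 1) fun d hd => ?_
    have hzv : Yvec d = v := (Finset.mem_filter.mp hd).2.2
    rw [hT, ← hzv]
    ring
  -- slot 3
  have hs3 : (∑ i ∈ Finset.Ico (2 * t.card) (3 * t.card),
      (∑ d ∈ Q.support.filter (fun d => grp n p d = 2 ∧ Xvec d = enum t (i - 2 * t.card)),
        coeff d Q * (mon (Yvec d) b * mon (Zvec d) c)) * mon (enum t (i - 2 * t.card)) a) =
      ∑ d ∈ Q.support.filter (fun d => grp n p d = 2), T d := by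
    rw [Finset.sum_Ico_eq_sum_range]
    have h2 : 3 * t.card - 2 * t.card = t.card := by omega
    rw [h2]
    simp only [Nat.add_sub_cancel_left]
    rw [sum_enum t (fun v => (∑ d ∈ Q.support.filter (fun d => grp n p d = 2 ∧ Xvec d = v),
      coeff d Q * (mon (Yvec d) b * mon (Zvec d) c)) * mon v a)]
    rw [← Finset.sum_fiberwise_of_maps_to (g := Xvec)
      (fun d hd => hmem _ (grp_eq_two (Finset.mem_filter.mp hd).2)) T]
    refine Finset.sum_congr rfl fun v hv => ?_
    rw [Finset.filter_filter, Finset.sum_mul]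
    refine Finset.sum_congr (by congr 1) fun d hd => ?_
    have hzv : Xvec d = v := (Finset.mem_filter.mp hd).2.2
    rw [hT, ← hzv]
    ring
  rw [hs1, hs2, hs3]
end

section
/- For every natural number n ≥ 1 and every real number x with 0 < x < 1, we have (1 + x)^n / (n + 1) < max_{0 ≤ k ≤ ⌊n/2⌋} C(n, k)·x^k < (1 + x)^n. -/
/-!
The terms `C(n, k) x^k`, `k ≤ n`, sum to `(1 + x)^n`. Since `C(n, k) = C(n, n - k)` and `x ≤ 1`,
a term with `k > n / 2` is dominated by the term of index `n - k`, so the maximum over `k ≤ n / 2`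
is the maximum of all `n + 1` terms: it is at most their sum and at least their average, both
strictly because the terms are positive and the last one, `x^n`, is smaller than the first, `1`.
-/

open Finset

variable {R : Type*} [CommSemiring R]

theorem one_add_pow_eq_sum_choose_mul_pow (x : R) (n : ℕ) :
    (1 + x) ^ n = ∑ k ∈ range (n + 1), (n.choose k : R) * x ^ k := by
  rw [add_comm, add_pow]
  exact sum_congr rfl fun k _ => by rw [one_pow, mul_one, mul_comm]

variable [LinearOrder R]

def maxBinomTerm (n : ℕ) (x : R) : R :=
  (range (n / 2 + 1)).sup' nonempty_range_add_one fun k => (n.choose k : R) * x ^ k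

theorem choose_mul_pow_le_maxBinomTerm_of_le {x : R} {n k : ℕ} (hk : k ≤ n / 2) :
    (n.choose k : R) * x ^ k ≤ maxBinomTerm n x :=
  le_sup' (fun k => (n.choose k : R) * x ^ k) (mem_range.2 (Nat.lt_succ_of_le hk))

theorem one_le_maxBinomTerm (n : ℕ) (x : R) : 1 ≤ maxBinomTerm n x := by
  simpa using choose_mul_pow_le_maxBinomTerm_of_le (x := x) (Nat.zero_le (n / 2))

variable [IsStrictOrderedRing R]

theorem choose_mul_pow_le_choose_sub_mul_pow {x : R} (hx0 : 0 ≤ x) (hx1 : x ≤ 1) {n k : ℕ}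
    (hkn : k ≤ n) (hk : n - k ≤ k) :
    (n.choose k : R) * x ^ k ≤ n.choose (n - k) * x ^ (n - k) := by
  rw [Nat.choose_symm hkn]
  exact mul_le_mul_of_nonneg_left (pow_le_pow_of_le_one hx0 hx1 hk) (Nat.cast_nonneg _)

theorem choose_mul_pow_le_maxBinomTerm {x : R} (hx0 : 0 ≤ x) (hx1 : x ≤ 1) (n k : ℕ) :
    (n.choose k : R) * x ^ k ≤ maxBinomTerm n x := by
  rcases le_or_gt k (n / 2) with hk | hk
  · exact choose_mul_pow_le_maxBinomTerm_of_le hk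
  rcases le_or_gt k n with hkn | hkn
  · exact (choose_mul_pow_le_choose_sub_mul_pow hx0 hx1 hkn (by omega)).trans
      (choose_mul_pow_le_maxBinomTerm_of_le (by omega))
  · rw [Nat.choose_eq_zero_of_lt hkn, Nat.cast_zero, zero_mul]
    exact zero_le_one.trans (one_le_maxBinomTerm n x)

theorem one_add_pow_lt_mul_maxBinomTerm {x : R} (hx0 : 0 ≤ x) (hx1 : x < 1) {n : ℕ}
    (hn : 0 < n) : (1 + x) ^ n < (n + 1) * maxBinomTerm n x := by
  have last_lt : (n.choose n : R) * x ^ n < maxBinomTerm n x := by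
    simpa using (pow_lt_one₀ hx0 hx1 hn.ne').trans_le (one_le_maxBinomTerm n x)
  calc (1 + x) ^ n = ∑ k ∈ range (n + 1), (n.choose k : R) * x ^ k :=
        one_add_pow_eq_sum_choose_mul_pow x n
    _ < ∑ _k ∈ range (n + 1), maxBinomTerm n x :=
        sum_lt_sum (fun k _ => choose_mul_pow_le_maxBinomTerm hx0 hx1.le n k)
          ⟨n, self_mem_range_succ n, last_lt⟩
    _ = (n + 1) * maxBinomTerm n x := by simp

theorem maxBinomTerm_lt_one_add_pow {x : R} (hx0 : 0 < x) {n : ℕ} (hn : 0 < n) :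
    maxBinomTerm n x < (1 + x) ^ n := by
  obtain ⟨k, hk, hmax⟩ := exists_mem_eq_sup' (s := range (n / 2 + 1)) nonempty_range_add_one
    fun k => (n.choose k : R) * x ^ k
  have hkn : k < n := by
    have := mem_range.1 hk
    omega
  rw [maxBinomTerm, hmax, one_add_pow_eq_sum_choose_mul_pow]
  exact single_lt_sum (f := fun k => (n.choose k : R) * x ^ k) hkn.ne'
    (mem_range.2 (by omega)) (self_mem_range_succ n) (by simpa using pow_pos hx0 n)
    fun j _ _ => by positivity

/-- For `n ≥ 1` and `0 < x < 1`:
`(1+x)^n / (n+1) < max_{0 ≤ k ≤ ⌊n/2⌋} C(n,k) x^k < (1+x)^n`. -/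
theorem max_binom_bounds (n : ℕ) (hn : 1 ≤ n) (x : ℝ) (hx0 : 0 < x) (hx1 : x < 1) :
    (1 + x) ^ n / ((n : ℝ) + 1) <
      (Finset.range (n / 2 + 1)).sup' Finset.nonempty_range_add_one
        (fun k => (n.choose k : ℝ) * x ^ k) ∧
    (Finset.range (n / 2 + 1)).sup' Finset.nonempty_range_add_one
        (fun k => (n.choose k : ℝ) * x ^ k) < (1 + x) ^ n := by
  refine ⟨?_, maxBinomTerm_lt_one_add_pow hx0 hn⟩
  rw [div_lt_iff₀ (by positivity), mul_comm]
  exact one_add_pow_lt_mul_maxBinomTerm hx0.le hx1 hn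
end
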